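/- arXiv:1604.00719 — 2 statements merged into one kernel-verified Lean document; each statement's English description precedes it below -/
import Mathlib

section
/- The space 𝔅 of analytic almost commuting pairs is renormalization invariant: if ζ∈𝔅 is renormalizable (i.e. χ(ζ)<∞), then ℛζ∈𝔅; that is, the renormalization of an almost commuting pair is again an almost commuting pair (non-decreasing interval maps, analytic on neighborhoods of their intervals of definition with single critical points of order 3 at the origin, and commutator vanishing to order strictly higher than 3 at the origin). -/
/-
Common definitions: analytic almost commuting pairs (with complex analytic
extensions), their heights, renormalization, rotation number, the Banach
“manifold” 𝔅^{D,E} of normalized almost commuting pairs (viewed inside the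
real slice of C^ω(D) × C^ω(E)), sup-norm distances, tangent vectors and the
expanding cone.  Maps are encoded as total functions `ℂ → ℂ`; all defining
properties are imposed on the relevant domains.
-/

open Filter Topology Set

noncomputable section

/-- A pair of maps `ζ = (η, ξ)` encoded as total functions `ℂ → ℂ`. -/
abbrev CPair := (ℂ → ℂ) × (ℂ → ℂ)

/-- The real line inside `ℂ`. -/
def realLine : Set ℂ := Set.range Complex.ofReal

/-- The segment `[a,b] ⊆ ℝ ⊆ ℂ`. -/
def realSeg (a b : ℝ) : Set ℂ := Complex.ofReal '' Set.Icc a b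

/-- `f` is real-symmetric: `f(z̄) = f(z)‾` (so `f` preserves `ℝ`). -/
def RealSymm (f : ℂ → ℂ) : Prop := ∀ z, f (starRingEnd ℂ z) = starRingEnd ℂ (f z)

/-- `f` is analytic on an open (complex) neighborhood of the real interval `I`
with a single critical point, of order `3`, at the origin. -/
def CCubic (f : ℂ → ℂ) (I : Set ℝ) : Prop :=
  ∃ U : Set ℂ, IsOpen U ∧ Complex.ofReal '' I ⊆ U ∧ AnalyticOnNhd ℂ f U ∧
    (∀ z ∈ U, z ≠ 0 → deriv f z ≠ 0) ∧
    deriv f 0 = 0 ∧ iteratedDeriv 2 f 0 = 0 ∧ iteratedDeriv 3 f 0 ≠ 0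

/-- An (analytic) almost commuting pair: a pair of non-decreasing interval maps
`η : [0,ξ(0)] → [η(0), η(ξ(0))]`, `ξ : [η(0),0] → [ξ(η(0)), ξ(0)]`,
`η(0) < 0 < ξ(0)`, real-symmetric and analytic on neighborhoods of their
intervals of definition with single cubic critical points at the origin, whose
commutator `[η,ξ](x) = η(ξ(x)) − ξ(η(x))` is `o(x³)` at `x = 0`. -/
structure IsACP (ζ : CPair) : Prop where
  real_η : RealSymm ζ.1
  real_ξ : RealSymm ζ.2
  η0_neg : (ζ.1 0).re < 0
  ξ0_pos : 0 < (ζ.2 0).re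
  mono_η : MonotoneOn (fun x : ℝ => (ζ.1 x).re) (Icc 0 (ζ.2 0).re)
  mono_ξ : MonotoneOn (fun x : ℝ => (ζ.2 x).re) (Icc (ζ.1 0).re 0)
  map_η : MapsTo (fun x : ℝ => (ζ.1 x).re) (Icc 0 (ζ.2 0).re)
            (Icc (ζ.1 0).re (ζ.1 (ζ.2 0)).re)
  map_ξ : MapsTo (fun x : ℝ => (ζ.2 x).re) (Icc (ζ.1 0).re 0)
            (Icc (ζ.2 (ζ.1 0)).re (ζ.2 0).re)
  crit_η : CCubic ζ.1 (Icc 0 (ζ.2 0).re)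
  crit_ξ : CCubic ζ.2 (Icc (ζ.1 0).re 0)
  commut : (fun x : ℝ => ζ.1 (ζ.2 x) - ζ.2 (ζ.1 x)) =o[𝓝 0] fun x : ℝ => x ^ 3

/-- Height `χ(ζ) ∈ ℕ∞`: the `r` with `0 ∈ [η^{r+1}(ξ(0)), η^r(ξ(0))]`,
`⊤` if no such `r` exists. -/
def cheight (ζ : CPair) : ℕ∞ :=
  sInf ((fun r : ℕ => (r : ℕ∞)) ''
    {r : ℕ | (ζ.1^[r+1] (ζ.2 0)).re ≤ 0 ∧ 0 ≤ (ζ.1^[r] (ζ.2 0)).re})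

/-- `ζ` is renormalizable iff `χ(ζ) < ∞`. -/
def CRenormalizable (ζ : CPair) : Prop := cheight ζ ≠ ⊤

/-- Pre-renormalization `pℛζ = (η^r ∘ ξ, η)` (no rescaling). -/
def cpreRenorm (ζ : CPair) : CPair :=
  (fun z => ζ.1^[(cheight ζ).toNat] (ζ.2 z), ζ.1)

/-- Renormalization `ℛζ`: the pre-renormalization conjugated by the linear
rescaling `z ↦ η(0)·z`. -/
def crenorm (ζ : CPair) : CPair :=
  (fun z => ζ.1^[(cheight ζ).toNat] (ζ.2 (ζ.1 0 * z)) / ζ.1 0,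
   fun z => ζ.1 (ζ.1 0 * z) / ζ.1 0)

/-- The heights `rₙ = χ(ℛⁿζ)`. -/
def cheights (ζ : CPair) (n : ℕ) : ℕ∞ := cheight (crenorm^[n] ζ)

/-- `ζ` is at least `n` times renormalizable. -/
def CRenormN (ζ : CPair) (n : ℕ) : Prop := ∀ k < n, cheights ζ k ≠ ⊤

/-- `ζ` is infinitely renormalizable. -/
def CInfRenorm (ζ : CPair) : Prop := ∀ k, cheights ζ k ≠ ⊤

/-- Value of the finite continued fraction `[r₀,r₁,…] = 1/(r₀ + 1/(r₁ + ⋯))`,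
with `1/∞` understood as `0`. -/
def cfVal : List ℕ∞ → ℝ
  | [] => 0
  | r :: rest => if r = ⊤ then 0 else 1 / ((r.toNat : ℝ) + cfVal rest)

/-- The rotation number `ρ(ζ) ∈ [0,1]`: the value of the continued fraction
`[r₀,r₁,…]`, `rᵢ = χ(ℛⁱζ)` (as the limit of its convergents). -/
def crho (ζ : CPair) : ℝ :=
  limUnder atTop fun n : ℕ => cfVal ((List.range n).map (cheights ζ))

/-- A topological disk in `ℂ`. -/
def TopDisk (D : Set ℂ) : Prop := IsOpen D ∧ IsConnected D ∧ SimplyConnectedSpace D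

/-- `f` is bounded on `D`. -/
def BddOn (f : ℂ → ℂ) (D : Set ℂ) : Prop := ∃ M, ∀ z ∈ D, ‖f z‖ ≤ M

/-- `D` is compactly contained in `D'`. -/
def CptIn (D D' : Set ℂ) : Prop := closure D ⊆ D' ∧ IsCompact (closure D)

/-- Membership in the ambient set 𝒲 ⊆ (the real slice of) C^ω(D) × C^ω(E):
real-symmetric pairs, holomorphic and bounded on `D` and `E`, monotone on
their real intervals, with single cubic critical points at the origin and the
normalization `1/(2C₀) < |η(0)| < 2C₀` (no commutation relation imposed). -/
structure InW (D E : Set ℂ) (C₀ : ℝ) (ζ : CPair) : Prop where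
  real_η : RealSymm ζ.1
  real_ξ : RealSymm ζ.2
  holo_η : DifferentiableOn ℂ ζ.1 D
  holo_ξ : DifferentiableOn ℂ ζ.2 E
  bdd_η : BddOn ζ.1 D
  bdd_ξ : BddOn ζ.2 E
  η0_neg : (ζ.1 0).re < 0
  ξ0_pos : 0 < (ζ.2 0).re
  mono_η : MonotoneOn (fun x : ℝ => (ζ.1 x).re) (Icc 0 (ζ.2 0).re)
  mono_ξ : MonotoneOn (fun x : ℝ => (ζ.2 x).re) (Icc (ζ.1 0).re 0)
  crit_η : CCubic ζ.1 (Icc 0 (ζ.2 0).re)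
  crit_ξ : CCubic ζ.2 (Icc (ζ.1 0).re 0)
  domE : realSeg (ζ.1 0).re 0 ⊆ E
  norm_η0_lo : 1 / (2 * C₀) < ‖ζ.1 0‖
  norm_η0_hi : ‖ζ.1 0‖ < 2 * C₀

/-- Membership in `𝔅^{D,E}`: an almost commuting pair whose maps extend to
bounded real-symmetric holomorphic maps on `D` and `E` (with `[η(0),0] ⊆ E`),
normalized by `ξ(0) = 1` and `1/(2C₀) < |η(0)| < 2C₀`. -/
structure MemB (D E : Set ℂ) (C₀ : ℝ) (ζ : CPair) : Prop where
  acp : IsACP ζ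
  holo_η : DifferentiableOn ℂ ζ.1 D
  holo_ξ : DifferentiableOn ℂ ζ.2 E
  bdd_η : BddOn ζ.1 D
  bdd_ξ : BddOn ζ.2 E
  domE : realSeg (ζ.1 0).re 0 ⊆ E
  norm_ξ0 : ζ.2 0 = 1
  norm_η0_lo : 1 / (2 * C₀) < ‖ζ.1 0‖
  norm_η0_hi : ‖ζ.1 0‖ < 2 * C₀

/-- Membership in `𝔄^{D,E}`: bounded real-symmetric holomorphic pairs on `D`,`E`
with commutator `o(z³)` at the origin and `ξ(0) = 1` (no criticality imposed). -/
structure MemA (D E : Set ℂ) (ζ : CPair) : Prop where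
  real_η : RealSymm ζ.1
  real_ξ : RealSymm ζ.2
  holo_η : DifferentiableOn ℂ ζ.1 D
  holo_ξ : DifferentiableOn ℂ ζ.2 E
  bdd_η : BddOn ζ.1 D
  bdd_ξ : BddOn ζ.2 E
  commut : (fun x : ℝ => ζ.1 (ζ.2 x) - ζ.2 (ζ.1 x)) =o[𝓝 0] fun x : ℝ => x ^ 3
  norm_ξ0 : ζ.2 0 = 1

/-- `sup_{z ∈ S} ‖f z‖`. -/
def supOn (f : ℂ → ℂ) (S : Set ℂ) : ℝ := sSup ((fun z => ‖f z‖) '' S)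

/-- The sup-norm distance on `𝔅^{D,E} ⊆ C^ω(D) × C^ω(E)`. -/
def pairDist (D E : Set ℂ) (ζ ζ' : CPair) : ℝ :=
  supOn (fun z => ζ.1 z - ζ'.1 z) D + supOn (fun z => ζ.2 z - ζ'.2 z) E

/-- The sup-norm of a (tangent) pair. -/
def pairNorm (D E : Set ℂ) (v : CPair) : ℝ := supOn v.1 D + supOn v.2 E

/-- `v` is a tangent vector to `𝔅^{D,E}` at `ζ`: the velocity at `t = 0` of a
curve through `ζ` lying in `𝔅^{D,E}`. -/
def IsTangent (D E : Set ℂ) (C₀ : ℝ) (ζ v : CPair) : Prop :=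
  ∃ c : ℝ → CPair, c 0 = ζ ∧ (∀ᶠ t in 𝓝 (0:ℝ), MemB D E C₀ (c t)) ∧
    ∀ z, HasDerivAt (fun t : ℝ => (c t).1 z) (v.1 z) 0 ∧
         HasDerivAt (fun t : ℝ => (c t).2 z) (v.2 z) 0

/-- `v` is a tangent vector to the subset `S` of pairs at `ζ`. -/
def IsTangentToSet (S : Set CPair) (ζ v : CPair) : Prop :=
  ∃ c : ℝ → CPair, c 0 = ζ ∧ (∀ᶠ t in 𝓝 (0:ℝ), c t ∈ S) ∧
    ∀ z, HasDerivAt (fun t : ℝ => (c t).1 z) (v.1 z) 0 ∧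
         HasDerivAt (fun t : ℝ => (c t).2 z) (v.2 z) 0

/-- `∇_{v̄}(pℛ²ζ)(x)`, first component: the derivative at `t = 0` of the first
map of the second pre-renormalization along the curve `ζ + t·v`, at `x`. -/
def gradPR2η (ζ v : CPair) (x : ℝ) : ℝ :=
  deriv (fun t : ℝ => ((cpreRenorm (cpreRenorm (ζ + t • v))).1 x).re) 0

/-- `∇_{v̄}(pℛ²ζ)(x)`, second component. -/
def gradPR2ξ (ζ v : CPair) (x : ℝ) : ℝ :=
  deriv (fun t : ℝ => ((cpreRenorm (cpreRenorm (ζ + t • v))).2 x).re) 0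

/-- The interval of definition `I₂` of the first map of `pℛ²ζ`. -/
def cI2 (ζ : CPair) : Set ℝ := uIcc 0 ((cpreRenorm (cpreRenorm ζ)).2 0).re

/-- The interval of definition `J₂` of the second map of `pℛ²ζ`. -/
def cJ2 (ζ : CPair) : Set ℝ := uIcc 0 ((cpreRenorm (cpreRenorm ζ)).1 0).re

/-- The expanding cone `C_ζ`: tangent vectors `v̄` with
`inf_{x ∈ I₂ ∪ J₂} ∇_{v̄}(pℛ²ζ)(x) > 0`. -/
def InCone (ζ v : CPair) : Prop :=
  ∃ ε > 0, (∀ x ∈ cI2 ζ, ε ≤ gradPR2η ζ v x) ∧ (∀ x ∈ cJ2 ζ, ε ≤ gradPR2ξ ζ v x)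

/-- `inf_{x ∈ I₂ ∪ J₂} ∇_{v̄}(pℛ²ζ)(x)`. -/
def coneEps (ζ v : CPair) : ℝ :=
  sInf ((gradPR2η ζ v '' cI2 ζ) ∪ (gradPR2ξ ζ v '' cJ2 ζ))

/-- The (Gateaux) differential of `ℛ^m` at `ζ` in the direction `v`. -/
def DRen (m : ℕ) (ζ v : CPair) : CPair :=
  (fun z => deriv (fun t : ℝ => (crenorm^[m] (ζ + t • v)).1 z) 0,
   fun z => deriv (fun t : ℝ => (crenorm^[m] (ζ + t • v)).2 z) 0)

/-- Sequential compactness of a set of pairs with respect to the sup-norm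
distance on `C^ω(D) × C^ω(E)`. -/
def SeqCompactB (D E : Set ℂ) (S : Set CPair) : Prop :=
  ∀ u : ℕ → CPair, (∀ j, u j ∈ S) →
    ∃ ζ ∈ S, ∃ φ : ℕ → ℕ, StrictMono φ ∧
      Tendsto (fun j => pairDist D E (u (φ j)) ζ) atTop (𝓝 0)

/-- `l ++ l ++ ⋯ ++ l` (`r` times). -/
def repList {α : Type*} : ℕ → List α → List α
  | 0, _ => []
  | n+1, l => l ++ repList n l

/-- `ζ^{w̄}` for a multi-index `w̄ = (a₁,b₁,…,a_m,b_m)`: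
`ζ^{w̄} = ξ^{b_m} ∘ η^{a_m} ∘ ⋯ ∘ ξ^{b₁} ∘ η^{a₁}` (head of the list acts first). -/
def cApplyWord (ζ : CPair) : List (ℕ × ℕ) → ℂ → ℂ
  | [], z => z
  | p :: rest, z => cApplyWord ζ rest (ζ.2^[p.2] (ζ.1^[p.1] z))

/-- The multi-indices `(s̄ₙ, t̄ₙ)` with `pℛⁿζ = (ζ^{s̄ₙ}|_{Iₙ}, ζ^{t̄ₙ}|_{Jₙ})`,
built from the prescribed sequence of heights `r`. -/
def wordsFrom (r : ℕ → ℕ) : ℕ → List (ℕ × ℕ) × List (ℕ × ℕ)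
  | 0 => ([(1, 0)], [(0, 1)])
  | n+1 =>
    let p := wordsFrom r n
    (p.2 ++ repList (r n) p.1, p.1)

/-- The multi-indices `(s̄ₙ, t̄ₙ)` of the `n`-th pre-renormalization of `ζ`. -/
def cWords (ζ : CPair) : ℕ → List (ℕ × ℕ) × List (ℕ × ℕ) :=
  wordsFrom fun n => (cheights ζ n).toNat

/-- The partial order on multi-indices:  `w̄ ≺ s̄` iff
`w̄ = (a₁,b₁,…,a_k,b_k,c,d)`, `s̄ = (a₁,b₁,…,a_k,b_k,a_{k+1},b_{k+1},…)` with
either `c < a_{k+1}, d = 0`, or `c = a_{k+1}, d < b_{k+1}`. -/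
def wPrec (w s : List (ℕ × ℕ)) : Prop :=
  ∃ (p rest : List (ℕ × ℕ)) (c d a b : ℕ),
    w = p ++ [(c, d)] ∧ s = p ++ (a, b) :: rest ∧
    ((c < a ∧ d = 0) ∨ (c = a ∧ d < b))

/-- `λₙ = (−1)ⁿ|Iₙ|`, where `Iₙ = [0, ζ^{t̄ₙ}(0)]`. -/
def clam (ζ : CPair) (n : ℕ) : ℝ :=
  (-1 : ℝ) ^ n * |(cApplyWord ζ (cWords ζ n).2 0).re|

/-!
Write `a = η(0) < 0 < b = ξ(0)`. Up to the conjugation by `z ↦ a z`, `ℛζ = (η^r ∘ ξ, η)`.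
Continuity of the commutator gives `ξ(a) = η(b)`, so `ξ` maps `[a, 0]` monotonically into
`[η(b), b]`. Minimality of the height keeps the orbit `ηᵏ(b)`, `k ≤ r`, positive, hence
`η^r` is monotone on `[η(b), b]` and the orbits of these points never meet the critical point
`0`: there `η^r` is analytic with non-vanishing derivative. Composing with such a map, or
rescaling, keeps the analytic order of `f - f(0)` at `0` equal to `3`, i.e. a cubic critical
point. Finally the commutator of `ℛζ` at `x` is `(η^r(ξη(ax)) - η^r(ηξ(ax))) / a`, which is
`o(x³)` because `η^r` is Lipschitz near `ξη(0) = ηξ(0)`.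
-/

def onReal (f : ℂ → ℂ) : ℝ → ℝ := fun x => (f x).re

def rescale (c : ℂ) (f : ℂ → ℂ) : ℂ → ℂ := fun z => f (c * z) / c

@[simp] theorem onReal_zero (f : ℂ → ℂ) : onReal f 0 = (f 0).re := by simp [onReal]

theorem onReal_rescale (c : ℝ) (f : ℂ → ℂ) (x : ℝ) :
    onReal (rescale c f) x = onReal f (c * x) / c := by
  simp [onReal, rescale]

namespace RealSymm

variable {f g : ℂ → ℂ}

theorem apply_ofReal (hf : RealSymm f) (x : ℝ) : f x = onReal f x :=
  (Complex.conj_eq_iff_re.mp (by rw [← hf, Complex.conj_ofReal])).symm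

theorem comp (hf : RealSymm f) (hg : RealSymm g) : RealSymm (f ∘ g) := fun z => by
  simp only [Function.comp_apply, hg z, hf (g z)]

theorem iterate (hf : RealSymm f) (k : ℕ) : RealSymm f^[k] := by
  induction k with
  | zero => exact fun z => rfl
  | succ k ih => rw [Function.iterate_succ]; exact ih.comp hf

theorem rescale (hf : RealSymm f) (c : ℝ) : RealSymm (rescale c f) := fun z => by
  simp only [_root_.rescale]
  rw [map_div₀, Complex.conj_ofReal, ← hf, map_mul, Complex.conj_ofReal]

theorem iterate_apply_ofReal (hf : RealSymm f) (k : ℕ) (x : ℝ) :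
    f^[k] x = ((onReal f)^[k] x : ℝ) := by
  induction k generalizing x with
  | zero => rfl
  | succ k ih => rw [Function.iterate_succ_apply, Function.iterate_succ_apply, hf.apply_ofReal, ih]

theorem onReal_comp (hg : RealSymm g) : onReal (f ∘ g) = onReal f ∘ onReal g := by
  ext x
  change (f (g x)).re = (f (onReal g x)).re
  rw [hg.apply_ofReal]

theorem onReal_iterate (hf : RealSymm f) (k : ℕ) : onReal f^[k] = (onReal f)^[k] :=
  funext fun x => by rw [onReal, hf.iterate_apply_ofReal, Complex.ofReal_re]

end RealSymm

section AnalyticOrder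

variable {𝕜 : Type*} [NontriviallyNormedField 𝕜]

theorem analyticOrderAt_sub_comp_eq {g f : 𝕜 → 𝕜} {z₀ : 𝕜} (hg : AnalyticAt 𝕜 g (f z₀))
    (hg' : deriv g (f z₀) ≠ 0) (hf : AnalyticAt 𝕜 f z₀) :
    analyticOrderAt (fun z => g (f z) - g (f z₀)) z₀ =
      analyticOrderAt (fun z => f z - f z₀) z₀ := by
  have := (hg.fun_sub (analyticAt_const (v := g (f z₀)))).analyticOrderAt_comp hf
  simp only [Function.comp_def] at this
  rw [this, hg.analyticOrderAt_sub_eq_one_of_deriv_ne_zero hg', one_mul]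

theorem analyticOrderAt_sub_comp_mul [CompleteSpace 𝕜] [CharZero 𝕜] {f : 𝕜 → 𝕜} {c : 𝕜}
    (hc : c ≠ 0) :
    analyticOrderAt (fun z => f (c * z) - f 0) 0 = analyticOrderAt (fun z => f z - f 0) 0 := by
  have := analyticOrderAt_comp_of_deriv_ne_zero (f := fun z => f z - f 0) (g := (c * ·))
    (z₀ := 0) (by fun_prop) (by simpa using hc)
  simpa [Function.comp_def] using this

theorem cubicCrit_iff_analyticOrderAt [CompleteSpace 𝕜] [CharZero 𝕜] {f : 𝕜 → 𝕜}
    (hf : AnalyticAt 𝕜 f 0) :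
    (deriv f 0 = 0 ∧ iteratedDeriv 2 f 0 = 0 ∧ iteratedDeriv 3 f 0 ≠ 0) ↔
      analyticOrderAt (fun z => f z - f 0) 0 = 3 := by
  rw [show (3 : ℕ∞) = (3 : ℕ) from rfl,
    analyticOrderAt_eq_nat_iff_iteratedDeriv_eq_zero (hf.fun_sub analyticAt_const)]
  simp [Nat.forall_lt_succ_left, Nat.le_one_iff_eq_zero_or_eq_one, or_imp, forall_and,
    iteratedDeriv_succ', and_assoc]

end AnalyticOrder

theorem CCubic.analyticAt {f : ℂ → ℂ} {I : Set ℝ} (hf : CCubic f I) {x : ℝ} (hx : x ∈ I) :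
    AnalyticAt ℂ f x := by
  obtain ⟨U, -, hIU, hfU, -⟩ := hf
  exact hfU _ (hIU ⟨x, hx, rfl⟩)

theorem CCubic.comp {f g : ℂ → ℂ} {I : Set ℝ} {V : Set ℂ} (hf : CCubic f I) (h0 : (0 : ℝ) ∈ I)
    (hV : IsOpen V) (hg : AnalyticOnNhd ℂ g V) (hg' : ∀ z ∈ V, deriv g z ≠ 0)
    (hfV : MapsTo f (Complex.ofReal '' I) V) : CCubic (g ∘ f) I := by
  obtain ⟨U, hU, hIU, hfU, hf', hcrit⟩ := hf
  have h0U : (0 : ℂ) ∈ U := hIU ⟨0, h0, Complex.ofReal_zero⟩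
  have h0V : f 0 ∈ V := hfV ⟨0, h0, Complex.ofReal_zero⟩
  refine ⟨U ∩ f ⁻¹' V, hfU.continuousOn.isOpen_inter_preimage hU hV,
    fun z hz => ⟨hIU hz, hfV hz⟩, fun z hz => (hg _ hz.2).comp (hfU z hz.1),
    fun z hz hz0 => ?_, ?_⟩
  · rw [deriv_comp z (hg _ hz.2).differentiableAt (hfU z hz.1).differentiableAt]
    exact mul_ne_zero (hg' _ hz.2) (hf' z hz.1 hz0)
  · rw [cubicCrit_iff_analyticOrderAt (hfU 0 h0U)] at hcrit
    rw [cubicCrit_iff_analyticOrderAt ((hg _ h0V).comp (hfU 0 h0U)), ← hcrit]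
    exact analyticOrderAt_sub_comp_eq (hg _ h0V) (hg' _ h0V) (hfU 0 h0U)

theorem CCubic.rescale {f : ℂ → ℂ} {I J : Set ℝ} {c : ℝ} (hf : CCubic f I) (hc : c ≠ 0)
    (h0 : (0 : ℝ) ∈ J) (hJ : MapsTo (c * ·) J I) : CCubic (rescale c f) J := by
  obtain ⟨U, hU, hIU, hfU, hf', hcrit⟩ := hf
  have hc' : (c : ℂ) ≠ 0 := Complex.ofReal_ne_zero.mpr hc
  have h0U : (0 : ℂ) ∈ U := by simpa using hIU ⟨_, hJ h0, rfl⟩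
  have hfc : AnalyticAt ℂ (fun z => f (c * z)) 0 :=
    AnalyticAt.comp (g := f) (by simpa using hfU 0 h0U) (by fun_prop)
  refine ⟨(c * ·) ⁻¹' U, hU.preimage (continuous_const_mul _), ?_,
    fun z hz => ((hfU _ hz).comp (by fun_prop)).div_const, fun z hz hz0 => ?_, ?_⟩
  · rintro _ ⟨x, hx, rfl⟩
    exact hIU ⟨c * x, hJ hx, by push_cast; rfl⟩
  · unfold _root_.rescale
    rw [deriv_div_const, deriv_comp_mul_left]
    exact div_ne_zero (smul_ne_zero hc' (hf' _ hz (mul_ne_zero hc' hz0))) hc'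
  · unfold _root_.rescale
    rw [cubicCrit_iff_analyticOrderAt (hfU 0 h0U)] at hcrit
    rw [cubicCrit_iff_analyticOrderAt hfc.div_const, ← hcrit,
      ← analyticOrderAt_sub_comp_mul (f := f) hc']
    simpa using analyticOrderAt_sub_comp_eq (g := fun w : ℂ => w / c) (by fun_prop)
      (by simpa using hc') hfc

theorem AnalyticOnNhd.iterate_of_deriv_ne_zero {𝕜 : Type*} [NontriviallyNormedField 𝕜]
    {f : 𝕜 → 𝕜} {U : Set 𝕜} (hU : IsOpen U) (hf : AnalyticOnNhd 𝕜 f U)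
    (hf' : ∀ z ∈ U, deriv f z ≠ 0) (k : ℕ) :
    IsOpen {z | ∀ j < k, f^[j] z ∈ U} ∧ AnalyticOnNhd 𝕜 f^[k] {z | ∀ j < k, f^[j] z ∈ U} ∧
      ∀ z ∈ {z | ∀ j < k, f^[j] z ∈ U}, deriv f^[k] z ≠ 0 := by
  induction k with
  | zero => exact ⟨by simp, fun z _ => analyticAt_id, by simp⟩
  | succ k ih =>
    obtain ⟨hS, hfS, hfS'⟩ := ih
    have hsucc : {z | ∀ j < k + 1, f^[j] z ∈ U} = {z | ∀ j < k, f^[j] z ∈ U} ∩ f^[k] ⁻¹' U := by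
      ext z
      simp only [mem_ofPred_eq, mem_inter_iff, mem_preimage, Nat.lt_succ_iff_lt_or_eq, or_imp,
        forall_and, forall_eq]
    rw [hsucc, Function.iterate_succ']
    refine ⟨hfS.continuousOn.isOpen_inter_preimage hS hU, fun z hz => (hf _ hz.2).comp (hfS z hz.1),
      fun z hz => ?_⟩
    rw [deriv_comp z (hf _ hz.2).differentiableAt (hfS z hz.1).differentiableAt]
    exact mul_ne_zero (hf' _ hz.2) (hfS' z hz.1)

theorem pos_of_forall_lt_not_straddle {α : Type*} [LinearOrder α] {c : α} {a : ℕ → α} {r : ℕ}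
    (h0 : c < a 0) (h : ∀ k < r, ¬(a (k + 1) ≤ c ∧ c ≤ a k)) : ∀ k ≤ r, c < a k := by
  intro k hk
  induction k with
  | zero => exact h0
  | succ k ih =>
    have hk' : c < a k := ih (by omega)
    exact lt_of_not_ge fun hle => h k (by omega) ⟨hle, hk'.le⟩

theorem MonotoneOn.iterate_mapsTo_Icc {f : ℝ → ℝ} {b : ℝ} {n : ℕ} (hf : MonotoneOn f (Icc 0 b))
    (hfb : f b ≤ b) (hpos : ∀ k ≤ n, 0 ≤ f^[k] b) {k : ℕ} (hk : k ≤ n) :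
    MapsTo f^[k] (Icc (f b) b) (Icc (f^[k + 1] b) b) ∧ MonotoneOn f^[k] (Icc (f b) b) := by
  induction k with
  | zero => exact ⟨mapsTo_id _, monotoneOn_id⟩
  | succ k ih =>
    obtain ⟨hmaps, hmono⟩ := ih (by omega)
    have hsub : Icc (f^[k + 1] b) b ⊆ Icc 0 b := Icc_subset_Icc_left (hpos (k + 1) hk)
    have hfkb : f^[k + 1] b ∈ Icc 0 b := by
      rw [Function.iterate_succ_apply]
      exact hsub (hmaps ⟨le_rfl, hfb⟩)
    rw [Function.iterate_succ']
    refine ⟨fun x hx => ⟨?_, ?_⟩, hf.comp hmono (hmaps.mono_right hsub)⟩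
    · rw [Function.iterate_succ_apply' f (k + 1)]
      exact hf hfkb (hsub (hmaps hx)) (hmaps hx).1
    · exact (hf (hsub (hmaps hx)) ⟨hpos 0 (Nat.zero_le n), le_rfl⟩ (hmaps hx).2).trans hfb

theorem MonotoneOn.comp_const_mul_div_of_neg {g : ℝ → ℝ} {s t : Set ℝ} {c : ℝ}
    (hg : MonotoneOn g s) (hc : c < 0) (hts : MapsTo (c * ·) t s) :
    MonotoneOn (fun x => g (c * x) / c) t := fun _ hx _ hy hxy =>
  div_le_div_of_nonpos_of_le hc.le (hg (hts hy) (hts hx) (mul_le_mul_of_nonpos_left hxy hc.le))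

theorem mapsTo_const_mul_Icc_of_neg {c : ℝ} (hc : c < 0) (a d : ℝ) :
    MapsTo (c * ·) (Icc a d) (Icc (c * d) (c * a)) := fun _ hx =>
  ⟨mul_le_mul_of_nonpos_left hx.2 hc.le, mul_le_mul_of_nonpos_left hx.1 hc.le⟩

namespace Asymptotics

theorem IsLittleO.comp_const_mul_pow {E : Type*} [Norm E] {f : ℝ → E} {n : ℕ}
    (hf : f =o[𝓝 0] (· ^ n)) (c : ℝ) : (fun x => f (c * x)) =o[𝓝 0] (· ^ n) := by
  have hc : Tendsto (c * ·) (𝓝 (0 : ℝ)) (𝓝 0) := by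
    simpa using (continuous_const_mul c).tendsto 0
  refine (hf.comp_tendsto hc).trans_isBigO ?_
  simpa only [Function.comp_def, mul_pow] using (isBigO_refl (· ^ n) _).const_mul_left (c ^ n)

theorem IsLittleO.comp_sub_comp {α 𝕜 E F G : Type*} [NontriviallyNormedField 𝕜]
    [NormedAddCommGroup E] [NormedSpace 𝕜 E] [NormedAddCommGroup F] [NormedSpace 𝕜 F]
    [Norm G] {l : Filter α} {u v : α → E} {g : α → G} {φ : E → F} {φ' : E →L[𝕜] F} {p : E}
    (huv : (fun x => u x - v x) =o[l] g) (hφ : HasStrictFDerivAt φ φ' p)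
    (hu : Tendsto u l (𝓝 p)) (hv : Tendsto v l (𝓝 p)) :
    (fun x => φ (u x) - φ (v x)) =o[l] g := by
  obtain ⟨K, t, ht, hφK⟩ := hφ.exists_lipschitzOnWith
  refine IsBigO.trans_isLittleO (IsBigO.of_bound K ?_) huv
  filter_upwards [hu ht, hv ht] with x hux hvx
  simpa only [dist_eq_norm] using hφK.dist_le_mul _ hux _ hvx

end Asymptotics

/-- The interval-mapping conditions of `IsACP` follow from monotonicity. -/
theorem IsACP.of_onReal {η ξ : ℂ → ℂ} (hη : RealSymm η) (hξ : RealSymm ξ)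
    (hη0 : onReal η 0 < 0) (hξ0 : 0 < onReal ξ 0)
    (hmη : MonotoneOn (onReal η) (Icc 0 (onReal ξ 0)))
    (hmξ : MonotoneOn (onReal ξ) (Icc (onReal η 0) 0))
    (hcη : CCubic η (Icc 0 (onReal ξ 0))) (hcξ : CCubic ξ (Icc (onReal η 0) 0))
    (hcomm : (fun x : ℝ => η (ξ x) - ξ (η x)) =o[𝓝 0] fun x : ℝ => x ^ 3) :
    IsACP (η, ξ) := by
  simp only [onReal_zero] at *
  have hη0' : η 0 = ((η 0).re : ℂ) := by simpa using hη.apply_ofReal 0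
  have hξ0' : ξ 0 = ((ξ 0).re : ℂ) := by simpa using hξ.apply_ofReal 0
  refine ⟨hη, hξ, hη0, hξ0, hmη, hmξ, ?_, ?_, hcη, hcξ, hcomm⟩
  · show MapsTo (onReal η) _ (Icc (η 0).re (η (ξ 0)).re)
    rw [congrArg η hξ0', ← onReal_zero]
    exact hmη.mapsTo_Icc
  · show MapsTo (onReal ξ) _ (Icc (ξ (η 0)).re (ξ 0).re)
    rw [congrArg ξ hη0', ← onReal_zero]
    exact hmξ.mapsTo_Icc

theorem not_straddle_of_lt_toNat_cheight (ζ : CPair) :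
    ∀ k < (cheight ζ).toNat, ¬((ζ.1^[k + 1] (ζ.2 0)).re ≤ 0 ∧ 0 ≤ (ζ.1^[k] (ζ.2 0)).re) :=
  fun k hk hS => hk.not_ge (ENat.toNat_le_of_le_natCast (sInf_le ⟨k, hS, rfl⟩))

namespace IsACP

variable {ζ : CPair}

theorem fst_zero_eq (h : IsACP ζ) : ζ.1 0 = onReal ζ.1 0 := by
  simpa using h.real_η.apply_ofReal 0

theorem snd_zero_eq (h : IsACP ζ) : ζ.2 0 = onReal ζ.2 0 := by
  simpa using h.real_ξ.apply_ofReal 0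

theorem commute_zero (h : IsACP ζ) : ζ.1 (ζ.2 0) = ζ.2 (ζ.1 0) := by
  simpa [sub_eq_zero] using h.commut.isBigO.eq_zero_imp.self_of_nhds (by simp)

theorem onReal_snd_fst_zero (h : IsACP ζ) :
    onReal ζ.2 (onReal ζ.1 0) = onReal ζ.1 (onReal ζ.2 0) := by
  change (ζ.2 (onReal ζ.1 0 : ℂ)).re = (ζ.1 (onReal ζ.2 0 : ℂ)).re
  rw [← h.fst_zero_eq, ← h.snd_zero_eq, h.commute_zero]

theorem monotoneOn_fst (h : IsACP ζ) : MonotoneOn (onReal ζ.1) (Icc 0 (onReal ζ.2 0)) := by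
  rw [onReal_zero]
  exact h.mono_η

theorem monotoneOn_snd (h : IsACP ζ) : MonotoneOn (onReal ζ.2) (Icc (onReal ζ.1 0) 0) := by
  rw [onReal_zero]
  exact h.mono_ξ

theorem mapsTo_snd (h : IsACP ζ) :
    MapsTo (onReal ζ.2) (Icc (onReal ζ.1 0) 0)
      (Icc (onReal ζ.1 (onReal ζ.2 0)) (onReal ζ.2 0)) := by
  simpa only [h.onReal_snd_fst_zero] using h.monotoneOn_snd.mapsTo_Icc

theorem onReal_fst_snd_zero_le (h : IsACP ζ) : onReal ζ.1 (onReal ζ.2 0) ≤ onReal ζ.2 0 := by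
  rw [← h.onReal_snd_fst_zero]
  exact (h.mapsTo_snd ⟨le_rfl, h.η0_neg.le⟩).2

theorem iterate_pos_of_le_toNat_cheight (h : IsACP ζ) :
    ∀ k ≤ (cheight ζ).toNat, 0 < (onReal ζ.1)^[k] (onReal ζ.2 0) :=
  pos_of_forall_lt_not_straddle (by simpa using h.ξ0_pos) fun k hk => by
    have hS := not_straddle_of_lt_toNat_cheight ζ k hk
    rwa [h.snd_zero_eq, h.real_η.iterate_apply_ofReal, h.real_η.iterate_apply_ofReal,
      Complex.ofReal_re, Complex.ofReal_re] at hS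

theorem iterate_mapsTo_monotoneOn (h : IsACP ζ) {r : ℕ}
    (hr : ∀ k ≤ r, 0 < (onReal ζ.1)^[k] (onReal ζ.2 0)) {k : ℕ} (hk : k ≤ r) :
    MapsTo (onReal ζ.1)^[k] (Icc (onReal ζ.1 (onReal ζ.2 0)) (onReal ζ.2 0))
        (Icc ((onReal ζ.1)^[k + 1] (onReal ζ.2 0)) (onReal ζ.2 0)) ∧
      MonotoneOn (onReal ζ.1)^[k] (Icc (onReal ζ.1 (onReal ζ.2 0)) (onReal ζ.2 0)) :=
  h.monotoneOn_fst.iterate_mapsTo_Icc h.onReal_fst_snd_zero_le (fun k hk => (hr k hk).le) hk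

theorem exists_analyticOnNhd_iterate (h : IsACP ζ) {r : ℕ}
    (hr : ∀ k ≤ r, 0 < (onReal ζ.1)^[k] (onReal ζ.2 0)) :
    ∃ V : Set ℂ, IsOpen V ∧ AnalyticOnNhd ℂ ζ.1^[r] V ∧ (∀ z ∈ V, deriv ζ.1^[r] z ≠ 0) ∧
      MapsTo ζ.2 (Complex.ofReal '' Icc (onReal ζ.1 0) 0) V := by
  obtain ⟨U, hU, hIU, hηU, hη', -⟩ := h.crit_η
  obtain ⟨hV, hηV, hηV'⟩ := AnalyticOnNhd.iterate_of_deriv_ne_zero (hU.sdiff isClosed_singleton)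
    (hηU.mono sdiff_subset) (fun z hz => hη' z hz.1 hz.2) r
  refine ⟨_, hV, hηV, hηV', ?_⟩
  rintro _ ⟨x, hx, rfl⟩ j hj
  obtain ⟨hmaps, -⟩ := h.iterate_mapsTo_monotoneOn hr hj.le
  have hjx := hmaps (h.mapsTo_snd hx)
  have hpos : 0 < (onReal ζ.1)^[j] (onReal ζ.2 x) := (hr (j + 1) hj).trans_le hjx.1
  rw [h.real_ξ.apply_ofReal, h.real_η.iterate_apply_ofReal]
  refine ⟨hIU ⟨_, ⟨hpos.le, ?_⟩, rfl⟩, Complex.ofReal_ne_zero.mpr hpos.ne'⟩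
  simpa using hjx.2

theorem ccubic_iterate_comp (h : IsACP ζ) {r : ℕ}
    (hr : ∀ k ≤ r, 0 < (onReal ζ.1)^[k] (onReal ζ.2 0)) :
    CCubic (ζ.1^[r] ∘ ζ.2) (Icc (onReal ζ.1 0) 0) := by
  obtain ⟨V, hV, hηV, hηV', hξV⟩ := h.exists_analyticOnNhd_iterate hr
  rw [onReal_zero]
  exact h.crit_ξ.comp ⟨h.η0_neg.le, le_rfl⟩ hV hηV hηV' (by simpa using hξV)

theorem commutator_rescale (h : IsACP ζ) {r : ℕ}
    (hr : ∀ k ≤ r, 0 < (onReal ζ.1)^[k] (onReal ζ.2 0)) :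
    (fun x : ℝ =>
      rescale (onReal ζ.1 0) (ζ.1^[r] ∘ ζ.2) (rescale (onReal ζ.1 0) ζ.1 x) -
        rescale (onReal ζ.1 0) ζ.1 (rescale (onReal ζ.1 0) (ζ.1^[r] ∘ ζ.2) x))
      =o[𝓝 0] fun x : ℝ => x ^ 3 := by
  set a := onReal ζ.1 0
  have ha : (a : ℂ) ≠ 0 := Complex.ofReal_ne_zero.mpr h.η0_neg.ne
  obtain ⟨V, -, hηV, -, hξV⟩ := h.exists_analyticOnNhd_iterate hr
  have hφ : AnalyticAt ℂ ζ.1^[r] (ζ.2 (ζ.1 0)) := by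
    rw [h.fst_zero_eq]
    exact hηV _ (hξV ⟨a, ⟨le_rfl, h.η0_neg.le⟩, rfl⟩)
  have hlim : ∀ {f g : ℂ → ℂ}, ContinuousAt g 0 → ContinuousAt f (g 0) →
      Tendsto (fun x : ℝ => f (g (a * x))) (𝓝 0) (𝓝 (f (g 0))) := fun hg hf => by
    simpa [Function.comp_def] using ((hf.comp hg).comp_of_eq
      (by fun_prop : ContinuousAt (fun x : ℝ => (a : ℂ) * x) 0) (by simp)).tendsto
  have hη : ∀ x ∈ Icc 0 (onReal ζ.2 0), ContinuousAt ζ.1 x := fun x hx =>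
    (h.crit_η.analyticAt (by simpa using hx)).continuousAt
  have hξ : ∀ x ∈ Icc a 0, ContinuousAt ζ.2 x := fun x hx =>
    (h.crit_ξ.analyticAt (by simpa [a] using hx)).continuousAt
  have hu := hlim (f := ζ.2) (g := ζ.1) (by simpa using hη 0 ⟨le_rfl, h.ξ0_pos.le⟩)
    (by rw [h.fst_zero_eq]; exact hξ a ⟨le_rfl, h.η0_neg.le⟩)
  have hv := hlim (f := ζ.1) (g := ζ.2) (by simpa using hξ 0 ⟨h.η0_neg.le, le_rfl⟩)
    (by rw [h.snd_zero_eq]; exact hη _ ⟨h.ξ0_pos.le, le_rfl⟩)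
  rw [h.commute_zero] at hv
  have huv : (fun x : ℝ => ζ.2 (ζ.1 (a * x)) - ζ.1 (ζ.2 (a * x))) =o[𝓝 0] fun x : ℝ => x ^ 3 := by
    simpa using (h.commut.comp_const_mul_pow a).neg_left
  have hcomm := (huv.comp_sub_comp hφ.hasStrictFDerivAt hu hv).const_mul_left (a : ℂ)⁻¹
  refine hcomm.congr_left fun x => ?_
  simp only [rescale, mul_div_cancel₀ _ ha, Function.comp_apply,
    (Function.Commute.self_iterate ζ.1 r).eq]
  ring

theorem renorm_of_pos (h : IsACP ζ) {r : ℕ}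
    (hr : ∀ k ≤ r, 0 < (onReal ζ.1)^[k] (onReal ζ.2 0)) :
    IsACP (rescale (onReal ζ.1 0) (ζ.1^[r] ∘ ζ.2), rescale (onReal ζ.1 0) ζ.1) := by
  have ha : onReal ζ.1 0 < 0 := by simpa using h.η0_neg
  have hcη : CCubic ζ.1 (Icc 0 (onReal ζ.2 0)) := by simpa using h.crit_η
  have hψr := h.iterate_mapsTo_monotoneOn hr le_rfl
  have hψrb := (hψr.1 ⟨h.onReal_fst_snd_zero_le, le_rfl⟩).2
  set a := onReal ζ.1 0
  set b := onReal ζ.2 0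
  set ψ := onReal ζ.1
  have hA : onReal (rescale a (ζ.1^[r] ∘ ζ.2)) = fun x => ψ^[r] (onReal ζ.2 (a * x)) / a := by
    ext x
    rw [onReal_rescale, h.real_ξ.onReal_comp, h.real_η.onReal_iterate]
    rfl
  have hB : onReal (rescale a ζ.1) = fun x => ψ (a * x) / a := funext (onReal_rescale a ζ.1)
  have hA0 : onReal (rescale a (ζ.1^[r] ∘ ζ.2)) 0 = ψ^[r] b / a := by
    simp only [hA, mul_zero]; rfl
  have hB0 : onReal (rescale a ζ.1) 0 = 1 := by
    simp only [hB, mul_zero]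
    exact div_self ha.ne
  have hJ : MapsTo (a * ·) (Icc 0 1) (Icc a 0) := by
    simpa using mapsTo_const_mul_Icc_of_neg ha 0 1
  have hI : MapsTo (a * ·) (Icc (ψ^[r] b / a) 0) (Icc 0 b) := by
    refine (mapsTo_const_mul_Icc_of_neg ha _ _).mono_right (Icc_subset_Icc (by simp) ?_)
    rwa [mul_div_cancel₀ _ ha.ne]
  have hA0neg : ψ^[r] b / a < 0 := div_neg_of_pos_of_neg (hr r le_rfl) ha
  refine .of_onReal (((h.real_η.iterate r).comp h.real_ξ).rescale a) (h.real_η.rescale a) ?_ ?_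
    ?_ ?_ ?_ ?_ (h.commutator_rescale hr)
  · rwa [hA0]
  · rw [hB0]; exact one_pos
  · rw [hB0, hA]
    exact (hψr.2.comp h.monotoneOn_snd h.mapsTo_snd).comp_const_mul_div_of_neg ha hJ
  · rw [hA0, hB]
    exact h.monotoneOn_fst.comp_const_mul_div_of_neg ha hI
  · rw [hB0]
    exact (h.ccubic_iterate_comp hr).rescale ha.ne ⟨le_rfl, zero_le_one⟩ hJ
  · rw [hA0]
    exact hcη.rescale ha.ne ⟨hA0neg.le, le_rfl⟩ hI

end IsACP

theorem renormalization_preserves_almost_commuting_general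
    (ζ : CPair) (h : IsACP ζ) :
    IsACP (crenorm ζ) := by
  have hR := h.renorm_of_pos h.iterate_pos_of_le_toNat_cheight
  rwa [← h.fst_zero_eq] at hR

theorem renormalization_preserves_almost_commuting
    (ζ : CPair) (h : IsACP ζ) (hr : CRenormalizable ζ) :
    IsACP (crenorm ζ) :=
  renormalization_preserves_almost_commuting_general ζ h
end
end

section
/- Let D'⊂ℂ and D⊂ℂ be domains, and let U={g∈C^ω(D'): g(D') is compactly contained in D}. Then the composition operator Comp: C^ω(D)×U→C^ω(D'), Comp(f,g)=f∘g, is Fréchet differentiable, and its differential at (f,g) is given by DComp|_{(f,g)}(φ,γ)=(f'∘g)·γ+φ∘g. -/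
/-
STATEMENT 10.  Let D', D ⊆ ℂ be domains and U = {g ∈ C^ω(D') : g(D') ⋐ D}.
Then the composition operator Comp : C^ω(D) × U → C^ω(D'), (f,g) ↦ f∘g, is
Fréchet differentiable, with differential
DComp|_{(f,g)}(φ,γ) = (f'∘g)·γ + φ∘g.

Here C^ω(W) — the Banach space of bounded holomorphic functions on W with the
sup norm — is realized as the subspace of bounded continuous functions on W
admitting holomorphic extensions.
-/

open Set

noncomputable section

/-- The subspace of `W →ᵇ ℂ` of functions holomorphic on `W`; with the sup
norm this realizes the Banach space `C^ω(W)` of bounded holomorphic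
functions. -/
def Hol (W : Set ℂ) : Submodule ℂ (BoundedContinuousFunction W ℂ) where
  carrier := {f | ∃ g : ℂ → ℂ, DifferentiableOn ℂ g W ∧ ∀ z : W, f z = g z}
  add_mem' := by
    rintro f f' ⟨g, hg, he⟩ ⟨g', hg', he'⟩
    exact ⟨g + g', hg.add hg', fun z => by
      simp [BoundedContinuousFunction.add_apply, he z, he' z]⟩
  zero_mem' := ⟨0, differentiableOn_const 0, fun z => rfl⟩
  smul_mem' := by
    rintro c f ⟨g, hg, he⟩
    exact ⟨c • g, hg.const_smul c, fun z => by
      simp [BoundedContinuousFunction.smul_apply, he z]⟩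

/-- The Banach space `C^ω(W)`. -/
abbrev Cw (W : Set ℂ) := ↥(Hol W)

/-- `g(D') ⋐ D`: the image of `g` is compactly contained in `D`.  (The set of
such `g` is the open set `U ⊆ C^ω(D')` of the statement.) -/
def CompactlyInto (D D' : Set ℂ) (g : Cw D') : Prop :=
  ∃ K : Set ℂ, IsCompact K ∧ K ⊆ D ∧ ∀ z : D', g.val z ∈ K

open scoped Classical in
/-- The composition operator `Comp(f, g) = f ∘ g` on
`C^ω(D) × C^ω(D') → C^ω(D')` (defined by choice on the locus where the
composition exists, and arbitrarily elsewhere). -/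
def compOp (D D' : Set ℂ) (fg : Cw D × Cw D') : Cw D' :=
  if h : ∃ c : Cw D', ∀ z : D',
      ∃ hz : fg.2.val z ∈ D, c.val z = fg.1.val ⟨fg.2.val z, hz⟩
  then h.choose else 0

/-! For small `γ`, the values of `g + γ` stay in a fixed `3r`-neighbourhood, inside `D`, of a
compact set containing `g(D')`, on which Cauchy's estimates bound `f'` and `f''` by `‖f‖ / r` and
`‖f‖ / r²`. Taylor's formula then makes `f ∘ (g + γ) - f ∘ g - (f' ∘ g) γ` quadratic in `‖γ‖`,
and the mean value theorem makes `φ ∘ (g + γ) - φ ∘ g` of order `‖φ‖ ‖γ‖`, uniformly on `D'`. -/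

open Metric Asymptotics Filter Topology

namespace Cw

variable {W : Set ℂ}

theorem ext {a b : Cw W} (h : ∀ z : W, a.val z = b.val z) : a = b :=
  Subtype.ext (BoundedContinuousFunction.ext h)

theorem norm_apply_le (a : Cw W) (z : W) : ‖a.val z‖ ≤ ‖a‖ :=
  a.val.norm_coe_le_norm z

theorem norm_le {a : Cw W} {C : ℝ} (hC : 0 ≤ C) (h : ∀ z : W, ‖a.val z‖ ≤ C) : ‖a‖ ≤ C :=
  (BoundedContinuousFunction.norm_le hC).2 h

def mk (F : ℂ → ℂ) (hF : DifferentiableOn ℂ F W) (C : ℝ) (hC : ∀ z ∈ W, ‖F z‖ ≤ C) :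
    Cw W :=
  ⟨.ofNormedAddCommGroup (fun z : W => F z) hF.continuousOn.domRestrict C fun z => hC z z.2,
    F, hF, fun _ => rfl⟩

/-- A holomorphic extension of `a` off `W`, chosen arbitrarily; only its values on `W` are
determined. -/
def holExt (a : Cw W) : ℂ → ℂ :=
  a.2.choose

theorem differentiableOn_holExt (a : Cw W) : DifferentiableOn ℂ (holExt a) W :=
  a.2.choose_spec.1

theorem holExt_eq (a : Cw W) {z : ℂ} (hz : z ∈ W) : holExt a z = a.val ⟨z, hz⟩ :=
  (a.2.choose_spec.2 ⟨z, hz⟩).symm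

theorem norm_holExt_le (a : Cw W) {z : ℂ} (hz : z ∈ W) : ‖holExt a z‖ ≤ ‖a‖ :=
  holExt_eq a hz ▸ norm_apply_le a _

theorem add_apply (a b : Cw W) (z : W) : (a + b).val z = a.val z + b.val z :=
  rfl

theorem sub_apply (a b : Cw W) (z : W) : (a - b).val z = a.val z - b.val z :=
  rfl

theorem holExt_add (a b : Cw W) {z : ℂ} (hz : z ∈ W) :
    holExt (a + b) z = holExt a z + holExt b z := by
  rw [holExt_eq _ hz, holExt_eq a hz, holExt_eq b hz]
  rfl

theorem holExt_smul (c : ℂ) (a : Cw W) {z : ℂ} (hz : z ∈ W) :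
    holExt (c • a) z = c * holExt a z := by
  rw [holExt_eq _ hz, holExt_eq a hz]
  rfl

def mulLeft (h : Cw W) : Cw W →L[ℂ] Cw W :=
  LinearMap.mkContinuous
    { toFun := fun γ => mk (holExt h * holExt γ)
        ((differentiableOn_holExt h).mul (differentiableOn_holExt γ)) (‖h‖ * ‖γ‖)
        fun z hz => by
          rw [Pi.mul_apply, norm_mul]
          exact mul_le_mul (norm_holExt_le h hz) (norm_holExt_le γ hz) (norm_nonneg _)
            (norm_nonneg _)
      map_add' := fun γ γ' => ext fun z => by
        change holExt h z * holExt (γ + γ') z =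
          holExt h z * holExt γ z + holExt h z * holExt γ' z
        rw [holExt_add _ _ z.2, mul_add]
      map_smul' := fun c γ => ext fun z => by
        change holExt h z * holExt (c • γ) z = c * (holExt h z * holExt γ z)
        rw [holExt_smul _ _ z.2, mul_left_comm] }
    ‖h‖ fun γ => norm_le (by positivity) fun z => by
      change ‖holExt h z * holExt γ z‖ ≤ _
      rw [norm_mul]
      exact mul_le_mul (norm_holExt_le h z.2) (norm_holExt_le γ z.2) (norm_nonneg _)
        (norm_nonneg _)

theorem mulLeft_apply (h γ : Cw W) (z : W) : (mulLeft h γ).val z = h.val z * γ.val z := by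
  change holExt h z * holExt γ z = _
  rw [holExt_eq h z.2, holExt_eq γ z.2]

theorem deriv_holExt_eq (hW : IsOpen W) (a : Cw W) {F : ℂ → ℂ} (haF : ∀ z : W, a.val z = F z)
    {z : ℂ} (hz : z ∈ W) : deriv (holExt a) z = deriv F z :=
  EventuallyEq.deriv_eq <| eventuallyEq_of_mem (hW.mem_nhds hz) fun u hu =>
    (holExt_eq a hu).trans (haF ⟨u, hu⟩)

variable {D D' : Set ℂ}

theorem mapsTo_holExt {g : Cw D'} (hg : ∀ z : D', g.val z ∈ D) : MapsTo (holExt g) D' D :=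
  fun z hz => holExt_eq g hz ▸ hg ⟨z, hz⟩

def compRight (g : Cw D') (hg : ∀ z : D', g.val z ∈ D) : Cw D →L[ℂ] Cw D' :=
  LinearMap.mkContinuous
    { toFun := fun f => mk (holExt f ∘ holExt g)
        ((differentiableOn_holExt f).comp (differentiableOn_holExt g) (mapsTo_holExt hg)) ‖f‖
        fun z hz => norm_holExt_le f (mapsTo_holExt hg hz)
      map_add' := fun f f' => ext fun z => holExt_add f f' (mapsTo_holExt hg z.2)
      map_smul' := fun c f => ext fun z => holExt_smul c f (mapsTo_holExt hg z.2) }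
    1 fun f => norm_le (by positivity) fun z => by
      rw [one_mul]
      exact norm_holExt_le f (mapsTo_holExt hg z.2)

theorem compRight_apply (g : Cw D') (hg : ∀ z : D', g.val z ∈ D) (f : Cw D) (z : D') :
    (compRight g hg f).val z = f.val ⟨g.val z, hg z⟩ := by
  change holExt f (holExt g z) = _
  rw [holExt_eq g z.2, holExt_eq f (hg _)]

end Cw

open Cw

theorem compOp_eq_compRight {D D' : Set ℂ} (f : Cw D) {g : Cw D'} (hg : ∀ z : D', g.val z ∈ D) :
    compOp D D' (f, g) = compRight g hg f := by
  have hex : ∃ c : Cw D', ∀ z : D', ∃ hz : g.val z ∈ D, c.val z = f.val ⟨g.val z, hz⟩ :=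
    ⟨compRight g hg f, fun z => ⟨hg z, compRight_apply g hg f z⟩⟩
  rw [compOp, dif_pos hex]
  refine Cw.ext fun z => ?_
  obtain ⟨_, h⟩ := hex.choose_spec z
  rw [h, compRight_apply]

section Estimates

variable {S : Set ℂ} {F : ℂ → ℂ} {M r : ℝ}

theorem norm_deriv_le_of_closedBall_subset (hF : DifferentiableOn ℂ F S)
    (hM : ∀ z ∈ S, ‖F z‖ ≤ M) (hr : 0 < r) {c : ℂ} (hc : closedBall c r ⊆ S) :
    ‖deriv F c‖ ≤ M / r :=
  Complex.norm_deriv_le_of_forall_mem_sphere_norm_le hr (hF.diffContOnCl_ball hc) fun z hz =>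
    hM z (hc (sphere_subset_closedBall hz))

theorem norm_sub_le_of_closedBall_subset (hF : DifferentiableOn ℂ F S)
    (hM : ∀ z ∈ S, ‖F z‖ ≤ M) (hr : 0 < r) {w ζ : ℂ} (hw : closedBall w (2 * r) ⊆ S)
    (hζ : ‖ζ‖ ≤ r) : ‖F (w + ζ) - F w‖ ≤ M / r * ‖ζ‖ := by
  have hball : ∀ u ∈ closedBall w r, closedBall u r ⊆ S := fun u hu =>
    (closedBall_subset_closedBall' (by rw [mem_closedBall] at hu; linarith)).trans hw
  have := (convex_closedBall w r).norm_image_sub_le_of_norm_deriv_le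
    (fun u hu => hF.differentiableAt (mem_of_superset (closedBall_mem_nhds u hr) (hball u hu)))
    (fun u hu => norm_deriv_le_of_closedBall_subset hF hM hr (hball u hu))
    (mem_closedBall_self hr.le) (by simpa [dist_eq_norm] using hζ : w + ζ ∈ closedBall w r)
  simpa using this

theorem norm_sub_sub_deriv_mul_le (hS : IsOpen S) (hF : DifferentiableOn ℂ F S)
    (hM : ∀ z ∈ S, ‖F z‖ ≤ M) (hr : 0 < r) {w ζ : ℂ} (hw : closedBall w (3 * r) ⊆ S)
    (hζ : ‖ζ‖ ≤ r) : ‖F (w + ζ) - F w - deriv F w * ζ‖ ≤ M / r ^ 2 * ‖ζ‖ ^ 2 := by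
  have hF' := hF.deriv hS
  have hball : ∀ u ∈ closedBall w r, closedBall u (2 * r) ⊆ S := fun u hu =>
    (closedBall_subset_closedBall' (by rw [mem_closedBall] at hu; linarith)).trans hw
  -- Cauchy's estimate applied twice: to `F` on balls of radius `r` around the sphere, then to `F'`.
  have hF'' : ∀ u ∈ closedBall w r, ‖deriv (deriv F) u‖ ≤ M / r ^ 2 := by
    intro u hu
    have hsphere : ∀ v ∈ sphere u r, ‖deriv F v‖ ≤ M / r := fun v hv =>
      norm_deriv_le_of_closedBall_subset hF hM hr
        ((closedBall_subset_closedBall' (by rw [mem_sphere] at hv; linarith)).trans (hball u hu))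
    calc ‖deriv (deriv F) u‖ ≤ M / r / r :=
          Complex.norm_deriv_le_of_forall_mem_sphere_norm_le hr
            (hF'.diffContOnCl_ball ((closedBall_subset_closedBall (by linarith)).trans
              (hball u hu))) hsphere
      _ = M / r ^ 2 := by rw [div_div, sq]
  have hmem : ∀ u ∈ closedBall w r, S ∈ 𝓝 u := fun u hu =>
    hS.mem_nhds (hw (closedBall_subset_closedBall (by linarith) hu))
  have hLip : ∀ u ∈ closedBall w r, ‖deriv F u - deriv F w‖ ≤ M / r ^ 2 * ‖u - w‖ := fun u hu =>
    (convex_closedBall w r).norm_image_sub_le_of_norm_deriv_le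
      (fun v hv => hF'.differentiableAt (hmem v hv)) hF'' (mem_closedBall_self hr.le) hu
  have hM0 : 0 ≤ M := (norm_nonneg _).trans (hM w (hw (mem_closedBall_self (by positivity))))
  have hζball : closedBall w ‖ζ‖ ⊆ closedBall w r := closedBall_subset_closedBall hζ
  have := (convex_closedBall w ‖ζ‖).norm_image_sub_le_of_norm_hasDerivWithin_le
    (f := fun u => F u - deriv F w * u) (f' := fun u => deriv F u - deriv F w)
    (C := M / r ^ 2 * ‖ζ‖)
    (fun u hu => ((hF.differentiableAt (hmem u (hζball hu))).hasDerivAt.sub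
      (by simpa using (hasDerivAt_id u).const_mul (deriv F w))).hasDerivWithinAt)
    (fun u hu => (hLip u (hζball hu)).trans (by gcongr; simpa [dist_eq_norm] using hu))
    (mem_closedBall_self (norm_nonneg ζ)) (by simp [dist_eq_norm] : w + ζ ∈ closedBall w ‖ζ‖)
  calc ‖F (w + ζ) - F w - deriv F w * ζ‖
      = ‖F (w + ζ) - deriv F w * (w + ζ) - (F w - deriv F w * w)‖ := by ring_nf
    _ ≤ M / r ^ 2 * ‖ζ‖ * ‖w + ζ - w‖ := this
    _ = M / r ^ 2 * ‖ζ‖ ^ 2 := by rw [add_sub_cancel_left]; ring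

end Estimates

section Differential

variable {D D' : Set ℂ}

def derivComp (hD : IsOpen D) (f : Cw D) (g : Cw D') {r : ℝ} (hr : 0 < r)
    (hball : ∀ z : D', closedBall (g.val z) r ⊆ D) : Cw D' :=
  mk (deriv (holExt f) ∘ holExt g)
    (((differentiableOn_holExt f).deriv hD).comp (differentiableOn_holExt g)
      (mapsTo_holExt fun z => hball z (mem_closedBall_self hr.le)))
    (‖f‖ / r) fun z hz => by
      rw [Function.comp_apply, holExt_eq g hz]
      exact norm_deriv_le_of_closedBall_subset (differentiableOn_holExt f)
        (fun _ => norm_holExt_le f) hr (hball _)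

theorem derivComp_apply (hD : IsOpen D) (f : Cw D) (g : Cw D') {r : ℝ} (hr : 0 < r)
    (hball : ∀ z : D', closedBall (g.val z) r ⊆ D) (z : D') :
    (derivComp hD f g hr hball).val z = deriv (holExt f) (g.val z) := by
  change deriv (holExt f) (holExt g z) = _
  rw [holExt_eq g z.2]

def compOpDeriv (hD : IsOpen D) (f : Cw D) (g : Cw D') {r : ℝ} (hr : 0 < r)
    (hball : ∀ z : D', closedBall (g.val z) r ⊆ D) : Cw D × Cw D' →L[ℂ] Cw D' :=
  (mulLeft (derivComp hD f g hr hball)).comp (.snd ℂ _ _) +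
    (compRight g fun z => hball z (mem_closedBall_self hr.le)).comp (.fst ℂ _ _)

theorem compOpDeriv_apply (hD : IsOpen D) (f : Cw D) (g : Cw D') {r : ℝ} (hr : 0 < r)
    (hball : ∀ z : D', closedBall (g.val z) r ⊆ D) (φ : Cw D) (γ : Cw D') (z : D') :
    (compOpDeriv hD f g hr hball (φ, γ)).val z =
      deriv (holExt f) (g.val z) * γ.val z +
        φ.val ⟨g.val z, hball z (mem_closedBall_self hr.le)⟩ := by
  simp only [compOpDeriv, _root_.add_apply, ContinuousLinearMap.comp_apply,
    ContinuousLinearMap.coe_fst', ContinuousLinearMap.coe_snd', Cw.add_apply, mulLeft_apply,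
    compRight_apply, derivComp_apply]

theorem norm_compOp_add_sub_sub_le (hD : IsOpen D) (f : Cw D) (g : Cw D') {r : ℝ} (hr : 0 < r)
    (hball : ∀ z : D', closedBall (g.val z) (3 * r) ⊆ D) (h : Cw D × Cw D') (hh : ‖h‖ ≤ r) :
    ‖compOp D D' ((f, g) + h) - compOp D D' (f, g) - compOpDeriv hD f g (by positivity) hball h‖
      ≤ (‖f‖ / r ^ 2 + 1 / r) * ‖h‖ ^ 2 := by
  obtain ⟨φ, γ⟩ := h
  have hγ : ∀ z, ‖γ.val z‖ ≤ ‖(φ, γ)‖ := fun z => (norm_apply_le γ z).trans (norm_snd_le (φ, γ))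
  have hg : ∀ z : D', g.val z ∈ D := fun z => hball z (mem_closedBall_self (by positivity))
  have hgγ : ∀ z : D', (g + γ).val z ∈ D := fun z => hball z <| by
    rw [mem_closedBall, dist_eq_norm, add_apply, add_sub_cancel_left]
    linarith [hγ z]
  rw [Prod.mk_add_mk, compOp_eq_compRight _ hgγ, compOp_eq_compRight _ hg]
  refine norm_le (by positivity) fun z => ?_
  set w := g.val z
  set ζ := γ.val z
  have hsplit : (compRight (g + γ) hgγ (f + φ) - compRight g hg f -
      compOpDeriv hD f g (by positivity) hball (φ, γ)).val z =
      (holExt f (w + ζ) - holExt f w - deriv (holExt f) w * ζ) +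
        (holExt φ (w + ζ) - holExt φ w) := by
    simp only [sub_apply, compRight_apply, compOpDeriv_apply, add_apply, ← holExt_eq]
    ring
  rw [hsplit]
  calc _ ≤ ‖holExt f (w + ζ) - holExt f w - deriv (holExt f) w * ζ‖ +
        ‖holExt φ (w + ζ) - holExt φ w‖ := norm_add_le _ _
    _ ≤ ‖f‖ / r ^ 2 * ‖ζ‖ ^ 2 + ‖φ‖ / r * ‖ζ‖ := add_le_add
        (norm_sub_sub_deriv_mul_le hD (differentiableOn_holExt f) (fun _ => norm_holExt_le f) hr
          (hball z) ((hγ z).trans hh))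
        (norm_sub_le_of_closedBall_subset (differentiableOn_holExt φ)
          (fun _ => norm_holExt_le φ) hr
          ((closedBall_subset_closedBall (by linarith)).trans (hball z)) ((hγ z).trans hh))
    _ ≤ ‖f‖ / r ^ 2 * ‖(φ, γ)‖ ^ 2 + ‖(φ, γ)‖ / r * ‖(φ, γ)‖ := by
        gcongr
        exacts [hγ z, norm_fst_le (φ, γ), hγ z]
    _ = (‖f‖ / r ^ 2 + 1 / r) * ‖(φ, γ)‖ ^ 2 := by ring

end Differential

theorem composition_operator_frechet_differentiable_general
    (D D' : Set ℂ) (hD : IsOpen D)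
    (f : Cw D) (g : Cw D') (hg : CompactlyInto D D' g) :
    ∃ L : Cw D × Cw D' →L[ℂ] Cw D',
      -- Comp is Fréchet differentiable at (f,g) with differential L:
      HasFDerivAt (compOp D D') L (f, g) ∧
      -- L is given by the formula (φ,γ) ↦ (f'∘g)·γ + φ∘g :
      (∀ (φ : Cw D) (γ : Cw D') (F Φ : ℂ → ℂ),
        DifferentiableOn ℂ F D → (∀ z : D, f.val z = F z) →
        DifferentiableOn ℂ Φ D → (∀ z : D, φ.val z = Φ z) →
        ∀ z : D', (L (φ, γ)).val z = deriv F (g.val z) * γ.val z + Φ (g.val z)) := by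
  obtain ⟨K, hK, hKD, hgK⟩ := hg
  obtain ⟨δ, hδ, hδD⟩ := hK.exists_cthickening_subset_open hD hKD
  obtain ⟨r, hr, hball⟩ : ∃ r > 0, ∀ z : D', closedBall (g.val z) (3 * r) ⊆ D :=
    ⟨δ / 3, by positivity, fun z => by
      rw [mul_div_cancel₀ _ three_ne_zero]
      exact (closedBall_subset_cthickening (hgK z) δ).trans hδD⟩
  refine ⟨compOpDeriv hD f g (by positivity) hball, ?_, ?_⟩
  · rw [hasFDerivAt_iff_isLittleO_nhds_zero]
    refine (IsBigO.of_bound (‖f‖ / r ^ 2 + 1 / r) ?_).trans_isLittleO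
      (isLittleO_norm_pow_id one_lt_two)
    filter_upwards [closedBall_mem_nhds 0 hr] with h hh
    rw [norm_pow, norm_norm]
    exact norm_compOp_add_sub_sub_le hD f g hr hball h (mem_closedBall_zero_iff.1 hh)
  · intro φ γ F Φ _ hfF _ hφΦ z
    rw [compOpDeriv_apply, hφΦ,
      deriv_holExt_eq hD f hfF (hball z (mem_closedBall_self (by positivity)))]

theorem composition_operator_frechet_differentiable
    (D D' : Set ℂ) (hD : IsOpen D) (hD' : IsOpen D')
    (hDconn : IsConnected D) (hD'conn : IsConnected D')
    (f : Cw D) (g : Cw D') (hg : CompactlyInto D D' g) :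
    ∃ L : Cw D × Cw D' →L[ℂ] Cw D',
      -- Comp is Fréchet differentiable at (f,g) with differential L:
      HasFDerivAt (compOp D D') L (f, g) ∧
      -- L is given by the formula (φ,γ) ↦ (f'∘g)·γ + φ∘g :
      (∀ (φ : Cw D) (γ : Cw D') (F Φ : ℂ → ℂ),
        DifferentiableOn ℂ F D → (∀ z : D, f.val z = F z) →
        DifferentiableOn ℂ Φ D → (∀ z : D, φ.val z = Φ z) →
        ∀ z : D', (L (φ, γ)).val z = deriv F (g.val z) * γ.val z + Φ (g.val z)) :=
  composition_operator_frechet_differentiable_general D D' hD f g hg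
end
end
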